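/- arXiv:1904.06944 — 6 statements merged into one kernel-verified Lean document; each statement's English description precedes it below -/
import Mathlib

section
/- Let A and B be unital *-algebras over ℂ, Θ : A ⊗ B → A ⊗ B a unital *-algebra homomorphism, and σ a state on B. For every B̂ ∈ B, the element ε_σ(star B̂ * B̂) − star(ε_σ(B̂)) * ε_σ(B̂) of A is a sum of squares, where ε_σ(B̂) = η_σ(Θ(1 ⊗ B̂)). -/
/-! Put `x = Θ (1 ⊗ B̂)`. As `Θ` is a *-homomorphism, the defect is `η(x* x) - η(x)* η(x)`.
Since `η` is an `A`-bimodule map commuting with the star and `η(c ⊗ 1) = c`, this equals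
`η(y* y)` for the centred element `y = x - η(x) ⊗ 1`. Writing `y = ∑ aᵢ ⊗ bᵢ` gives
`η(y* y) = ∑ σ(bᵢ* bⱼ) aᵢ* aⱼ`. The Gram matrix `(σ(bᵢ* bⱼ))` is positive semidefinite, hence a
sum of rank-one matrices `v vᴴ`, each of which contributes the square of `∑ conj(vⱼ) aⱼ`. -/

open scoped TensorProduct

noncomputable section

/-- A linear functional on a unital *-algebra over ℂ is *positive* if it takes
nonnegative real values on elements of the form `star x * x`. -/
def IsPositiveLF {A : Type} [Ring A] [Algebra ℂ A] [StarRing A] (φ : A →ₗ[ℂ] ℂ) : Prop :=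
  ∀ x : A, ∃ r : ℝ, 0 ≤ r ∧ φ (star x * x) = (r : ℂ)

/-- A *state* on a unital *-algebra over ℂ: a positive, normalised linear functional
compatible with the star operation. -/
def IsState {A : Type} [Ring A] [Algebra ℂ A] [StarRing A] (φ : A →ₗ[ℂ] ℂ) : Prop :=
  IsPositiveLF φ ∧ φ 1 = 1 ∧ ∀ x : A, φ (star x) = starRingEnd ℂ (φ x)

/-- An element of a *-algebra is a *sum of squares* if it is a finite sum of
elements of the form `star c * c`. -/
def IsSumOfStarSquares {A : Type} [Ring A] [StarRing A] (a : A) : Prop :=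
  ∃ (n : ℕ) (c : Fin n → A), a = ∑ i, star (c i) * c i

/-- The product functional `ω ⊗ σ`, determined by `(ω ⊗ σ)(a ⊗ b) = ω(a) * σ(b)`. -/
def prodLF {A B : Type} [AddCommGroup A] [Module ℂ A] [AddCommGroup B] [Module ℂ B]
    (ω : A →ₗ[ℂ] ℂ) (σ : B →ₗ[ℂ] ℂ) : A ⊗[ℂ] B →ₗ[ℂ] ℂ :=
  (TensorProduct.lid ℂ ℂ).toLinearMap ∘ₗ TensorProduct.map ω σ

lemma prodLF_tmul {A B : Type} [AddCommGroup A] [Module ℂ A] [AddCommGroup B] [Module ℂ B]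
    (ω : A →ₗ[ℂ] ℂ) (σ : B →ₗ[ℂ] ℂ) (a : A) (b : B) :
    prodLF ω σ (a ⊗ₜ[ℂ] b) = ω a * σ b := by
  simp [prodLF, smul_eq_mul, mul_comm]

/-- The slice map `η_σ : A ⊗ B → A`, determined by `η_σ(a ⊗ b) = σ(b) • a`. -/
def sliceLF {A B : Type} [AddCommGroup A] [Module ℂ A] [AddCommGroup B] [Module ℂ B]
    (σ : B →ₗ[ℂ] ℂ) : A ⊗[ℂ] B →ₗ[ℂ] A :=
  (TensorProduct.rid ℂ A).toLinearMap ∘ₗ TensorProduct.map LinearMap.id σ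

lemma sliceLF_tmul {A B : Type} [AddCommGroup A] [Module ℂ A] [AddCommGroup B] [Module ℂ B]
    (σ : B →ₗ[ℂ] ℂ) (a : A) (b : B) : sliceLF σ (a ⊗ₜ[ℂ] b) = σ b • a := by
  simp [sliceLF]

/-- The star operation on the algebraic tensor product `A ⊗[ℂ] B`, determined by
`star (a ⊗ b) = star a ⊗ star b` (it is additive). -/
def tensorStar {A B : Type} [AddCommGroup A] [Module ℂ A] [StarAddMonoid A] [StarModule ℂ A]
    [AddCommGroup B] [Module ℂ B] [StarAddMonoid B] [StarModule ℂ B] :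
    A ⊗[ℂ] B →+ A ⊗[ℂ] B :=
  TensorProduct.liftAddHom
    { toFun := fun a =>
        { toFun := fun b => star a ⊗ₜ[ℂ] star b
          map_zero' := by simp
          map_add' := fun b b' => by simp [star_add, TensorProduct.tmul_add] }
      map_zero' := by ext b; simp
      map_add' := fun a a' => by ext b; simp [star_add, TensorProduct.add_tmul] }
    (fun c a b => by
      simp only [AddMonoidHom.coe_mk, ZeroHom.coe_mk, star_smul, starRingEnd_apply,
        TensorProduct.smul_tmul, TensorProduct.smul_tmul'])

@[simp] lemma tensorStar_tmul {A B : Type} [AddCommGroup A] [Module ℂ A] [StarAddMonoid A]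
    [StarModule ℂ A] [AddCommGroup B] [Module ℂ B] [StarAddMonoid B] [StarModule ℂ B]
    (a : A) (b : B) : tensorStar (a ⊗ₜ[ℂ] b) = star a ⊗ₜ[ℂ] star b := rfl

/-- The pre-instrument `ℐ_σ(B̂)` associated to a coupling map `Θ`: it sends the
functional `ω` to the functional `a ↦ (ω ⊗ σ)(Θ(a ⊗ B̂))`. -/
def preInstrument {A B : Type} [Ring A] [Algebra ℂ A] [Ring B] [Algebra ℂ B]
    (Θ : A ⊗[ℂ] B →ₗ[ℂ] A ⊗[ℂ] B) (σ : B →ₗ[ℂ] ℂ) (Bhat : B)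
    (ω : A →ₗ[ℂ] ℂ) : A →ₗ[ℂ] ℂ :=
  prodLF ω σ ∘ₗ Θ ∘ₗ (TensorProduct.mk ℂ A B).flip Bhat

section StarAlgebra

open scoped ComplexOrder

variable {A : Type} [Ring A] [Algebra ℂ A] [StarRing A] [StarModule ℂ A]

lemma star_sum_smul_mul_sum_smul {ι κ : Type} [Fintype ι] [Fintype κ]
    (c : ι → ℂ) (a : ι → A) (c' : κ → ℂ) (a' : κ → A) :
    star (∑ i, c i • a i) * ∑ j, c' j • a' j
      = ∑ i, ∑ j, (star (c i) * c' j) • (star (a i) * a' j) := by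
  simp only [star_sum, star_smul, Finset.sum_mul_sum, smul_mul_smul_comm]

lemma isSumOfStarSquares_sum_smul_of_posSemidef {ι : Type} [Fintype ι] {M : Matrix ι ι ℂ}
    (hM : M.PosSemidef) (a : ι → A) :
    IsSumOfStarSquares (∑ i, ∑ j, M i j • (star (a i) * a j)) := by
  obtain ⟨m, v, rfl⟩ := Matrix.posSemidef_iff_eq_sum_vecMulVec.mp hM
  refine ⟨m, fun k => ∑ j, star (v k j) • a j, ?_⟩
  simp only [star_sum_smul_mul_sum_smul, star_star, Matrix.sum_apply, Matrix.vecMulVec_apply,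
    Pi.star_apply, Finset.sum_smul]
  exact Finset.sum_comm_cycle

lemma posSemidef_of_isPositiveLF {φ : A →ₗ[ℂ] ℂ} (hpos : IsPositiveLF φ)
    (hstar : ∀ x, φ (star x) = starRingEnd ℂ (φ x)) {ι : Type} [Fintype ι] (b : ι → A) :
    (Matrix.of fun i j => φ (star (b i) * b j)).PosSemidef := by
  refine .of_dotProduct_mulVec_nonneg ?_ fun v => ?_
  · ext i j
    simp [Matrix.conjTranspose_apply, ← hstar]
  · have hquad : star v ⬝ᵥ (Matrix.of fun i j => φ (star (b i) * b j)).mulVec v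
        = φ (star (∑ i, v i • b i) * ∑ i, v i • b i) := by
      rw [star_sum_smul_mul_sum_smul]
      simp only [map_sum, map_smul, dotProduct, Matrix.mulVec,
        Matrix.of_apply, Finset.mul_sum, Pi.star_apply, smul_eq_mul]
      exact Finset.sum_congr rfl fun _ _ => Finset.sum_congr rfl fun _ _ => by ring
    obtain ⟨r, hr, hφr⟩ := hpos (∑ i, v i • b i)
    rw [hquad, hφr]
    exact Complex.zero_le_real.mpr hr

end StarAlgebra

section Slice

variable {A B : Type} [Ring A] [Algebra ℂ A] [Ring B] [Algebra ℂ B] (σ : B →ₗ[ℂ] ℂ)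

lemma sliceLF_tmul_one_mul (c : A) (x : A ⊗[ℂ] B) :
    sliceLF σ ((c ⊗ₜ[ℂ] (1 : B)) * x) = c * sliceLF σ x := by
  induction x with
  | zero => simp
  | tmul a b => simp [Algebra.TensorProduct.tmul_mul_tmul, sliceLF_tmul]
  | add x y hx hy => simp only [mul_add, map_add, hx, hy]

lemma sliceLF_mul_tmul_one (x : A ⊗[ℂ] B) (c : A) :
    sliceLF σ (x * (c ⊗ₜ[ℂ] (1 : B))) = sliceLF σ x * c := by
  induction x with
  | zero => simp
  | tmul a b => simp [Algebra.TensorProduct.tmul_mul_tmul, sliceLF_tmul]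
  | add x y hx hy => simp only [add_mul, map_add, hx, hy]

variable {σ} [StarRing A] [StarModule ℂ A] [StarRing B] [StarModule ℂ B]

lemma sliceLF_tensorStar (hstar : ∀ b, σ (star b) = starRingEnd ℂ (σ b)) (x : A ⊗[ℂ] B) :
    sliceLF σ (tensorStar x) = star (sliceLF σ x) := by
  induction x with
  | zero => simp
  | tmul a b => simp [sliceLF_tmul, hstar, star_smul]
  | add x y hx hy => simp only [map_add, hx, hy, star_add]

lemma isSumOfStarSquares_sliceLF_tensorStar_mul_self (hpos : IsPositiveLF σ)
    (hstar : ∀ b, σ (star b) = starRingEnd ℂ (σ b)) (y : A ⊗[ℂ] B) :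
    IsSumOfStarSquares (sliceLF σ (tensorStar y * y)) := by
  obtain ⟨n, a, b, rfl⟩ := TensorProduct.exists_sum_tmul_eq y
  have hexpand : sliceLF σ (tensorStar (∑ i, a i ⊗ₜ[ℂ] b i) * ∑ i, a i ⊗ₜ[ℂ] b i)
      = ∑ i, ∑ j,
          (Matrix.of fun i j => σ (star (b i) * b j)) i j • (star (a i) * a j) := by
    simp [Finset.sum_mul_sum, Algebra.TensorProduct.tmul_mul_tmul, sliceLF_tmul]
  rw [hexpand]
  exact isSumOfStarSquares_sum_smul_of_posSemidef (posSemidef_of_isPositiveLF hpos hstar b) a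

lemma sliceLF_tensorStar_mul_self_sub (hσ1 : σ 1 = 1)
    (hstar : ∀ b, σ (star b) = starRingEnd ℂ (σ b)) (x : A ⊗[ℂ] B) :
    sliceLF σ (tensorStar x * x) - star (sliceLF σ x) * sliceLF σ x
      = sliceLF σ (tensorStar (x - sliceLF σ x ⊗ₜ[ℂ] 1) * (x - sliceLF σ x ⊗ₜ[ℂ] 1)) := by
  set c := sliceLF σ x
  have hc : sliceLF σ (tensorStar x) = star c := sliceLF_tensorStar hstar x
  rw [map_sub, tensorStar_tmul, star_one, sub_mul, mul_sub, mul_sub, map_sub, map_sub, map_sub,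
    sliceLF_mul_tmul_one, sliceLF_tmul_one_mul, Algebra.TensorProduct.tmul_mul_tmul, one_mul,
    sliceLF_tmul, hσ1, one_smul, hc]
  abel

lemma isSumOfStarSquares_sliceLF_tensorStar_mul_self_sub (hσ : IsState σ) (x : A ⊗[ℂ] B) :
    IsSumOfStarSquares (sliceLF σ (tensorStar x * x) - star (sliceLF σ x) * sliceLF σ x) := by
  rw [sliceLF_tensorStar_mul_self_sub hσ.2.1 hσ.2.2]
  exact isSumOfStarSquares_sliceLF_tensorStar_mul_self hσ.1 hσ.2.2 _

end Slice

variable {A B : Type}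
  [Ring A] [Algebra ℂ A] [StarRing A] [StarModule ℂ A]
  [Ring B] [Algebra ℂ B] [StarRing B] [StarModule ℂ B]

/-- the Kadison–Schwarz-type defect `ε_σ(B̂* B̂) − ε_σ(B̂)* ε_σ(B̂)` is a
sum of squares in `A`. -/
theorem induced_observable_schwarz
    (Θ : A ⊗[ℂ] B →ₐ[ℂ] A ⊗[ℂ] B)
    (hΘstar : ∀ x : A ⊗[ℂ] B, Θ (tensorStar x) = tensorStar (Θ x))
    (σ : B →ₗ[ℂ] ℂ) (hσ : IsState σ) (Bhat : B) :
    IsSumOfStarSquares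
      (sliceLF σ (Θ ((1 : A) ⊗ₜ[ℂ] (star Bhat * Bhat)))
        - star (sliceLF σ (Θ ((1 : A) ⊗ₜ[ℂ] Bhat))) * sliceLF σ (Θ ((1 : A) ⊗ₜ[ℂ] Bhat))) := by
  have hsquare : (1 : A) ⊗ₜ[ℂ] (star Bhat * Bhat)
      = tensorStar ((1 : A) ⊗ₜ[ℂ] Bhat) * ((1 : A) ⊗ₜ[ℂ] Bhat) := by
    rw [tensorStar_tmul, Algebra.TensorProduct.tmul_mul_tmul, star_one, one_mul]
  rw [hsquare, map_mul, hΘstar]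
  exact isSumOfStarSquares_sliceLF_tensorStar_mul_self_sub hσ _
end
end

section
/- Let A and B be unital *-algebras over ℂ, Θ : A ⊗ B → A ⊗ B a unital algebra homomorphism, σ a linear functional on B, and S a subset of A such that Θ(a ⊗ 1) = a ⊗ 1 for every a ∈ S. Then for every B̂ ∈ B, the induced observable ε_σ(B̂) = η_σ(Θ(1 ⊗ B̂)) commutes with every element of S: ε_σ(B̂) * a = a * ε_σ(B̂) for all a ∈ S. -/
open scoped TensorProduct

noncomputable section

variable {A B : Type}
  [Ring A] [Algebra ℂ A] [StarRing A] [StarModule ℂ A]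
  [Ring B] [Algebra ℂ B] [StarRing B] [StarModule ℂ B]


lemma sliceLF_mul_right {A B : Type} [Ring A] [Algebra ℂ A] [Ring B] [Algebra ℂ B]
    (σ : B →ₗ[ℂ] ℂ) (x : A ⊗[ℂ] B) (a : A) :
    sliceLF σ (x * (a ⊗ₜ[ℂ] (1 : B))) = sliceLF σ x * a := by
  induction x using TensorProduct.induction_on with
  | zero => simp
  | tmul a' b => simp [Algebra.TensorProduct.tmul_mul_tmul, sliceLF_tmul, smul_mul_assoc]
  | add x y hx hy => simp [add_mul, hx, hy]

lemma sliceLF_mul_left {A B : Type} [Ring A] [Algebra ℂ A] [Ring B] [Algebra ℂ B]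
    (σ : B →ₗ[ℂ] ℂ) (x : A ⊗[ℂ] B) (a : A) :
    sliceLF σ ((a ⊗ₜ[ℂ] (1 : B)) * x) = a * sliceLF σ x := by
  induction x using TensorProduct.induction_on with
  | zero => simp
  | tmul a' b => simp [Algebra.TensorProduct.tmul_mul_tmul, sliceLF_tmul, mul_smul_comm]
  | add x y hx hy => simp [mul_add, hx, hy]

/-- if `Θ` fixes `a ⊗ 1` for every `a` in a subset `S` of `A`, then every
induced observable `ε_σ(B̂)` commutes with every element of `S`. -/
theorem induced_observable_commutes
    (Θ : A ⊗[ℂ] B →ₐ[ℂ] A ⊗[ℂ] B) (σ : B →ₗ[ℂ] ℂ) (S : Set A)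
    (hS : ∀ a ∈ S, Θ (a ⊗ₜ[ℂ] (1 : B)) = a ⊗ₜ[ℂ] (1 : B)) :
    ∀ Bhat : B, ∀ a ∈ S,
      sliceLF σ (Θ ((1 : A) ⊗ₜ[ℂ] Bhat)) * a = a * sliceLF σ (Θ ((1 : A) ⊗ₜ[ℂ] Bhat)) := by
  intro Bhat a ha
  have key : Θ ((1 : A) ⊗ₜ[ℂ] Bhat) * (a ⊗ₜ[ℂ] (1 : B))
      = (a ⊗ₜ[ℂ] (1 : B)) * Θ ((1 : A) ⊗ₜ[ℂ] Bhat) := by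
    rw [← hS a ha, ← map_mul, ← map_mul, Algebra.TensorProduct.tmul_mul_tmul,
      Algebra.TensorProduct.tmul_mul_tmul, one_mul, mul_one, one_mul, mul_one]
  rw [← sliceLF_mul_right σ _ a, key, sliceLF_mul_left]
end
end

section
/- Let A and B be unital *-algebras over ℂ, Θ : A ⊗ B → A ⊗ B a unital algebra homomorphism, ω a state on A, σ a state on B, and B̂ ∈ B. Let a ∈ A satisfy Θ(a ⊗ 1) = a ⊗ 1, and suppose ν := ω(ε_σ(B̂)) ≠ 0, where ε_σ(B̂) = η_σ(Θ(1 ⊗ B̂)). Define the post-selected functional ω'(x) = (ω ⊗ σ)(Θ(x ⊗ B̂)) / ν. Then ω'(a) = ω(a) if and only if ω(a * ε_σ(B̂)) = ω(a) · ω(ε_σ(B̂)), i.e., if and only if a is uncorrelated with ε_σ(B̂) in the state ω. -/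
open scoped TensorProduct

noncomputable section

variable {A B : Type}
  [Ring A] [Algebra ℂ A] [StarRing A] [StarModule ℂ A]
  [Ring B] [Algebra ℂ B] [StarRing B] [StarModule ℂ B]

/-- for `a` fixed by `Θ`, the post-selected expectation value of `a` is
unchanged iff `a` is uncorrelated with the induced observable `ε_σ(B̂)` in the
state `ω`. -/
theorem postselected_expectation_unchanged_iff
    (Θ : A ⊗[ℂ] B →ₐ[ℂ] A ⊗[ℂ] B)
    (ω : A →ₗ[ℂ] ℂ) (hω : IsState ω) (σ : B →ₗ[ℂ] ℂ) (hσ : IsState σ)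
    (Bhat : B) (a : A) (ha : Θ (a ⊗ₜ[ℂ] (1 : B)) = a ⊗ₜ[ℂ] (1 : B))
    (hν : ω (sliceLF σ (Θ ((1 : A) ⊗ₜ[ℂ] Bhat))) ≠ 0) :
    prodLF ω σ (Θ (a ⊗ₜ[ℂ] Bhat)) / ω (sliceLF σ (Θ ((1 : A) ⊗ₜ[ℂ] Bhat))) = ω a ↔
      ω (a * sliceLF σ (Θ ((1 : A) ⊗ₜ[ℂ] Bhat)))
        = ω a * ω (sliceLF σ (Θ ((1 : A) ⊗ₜ[ℂ] Bhat))) := by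
  have key : ∀ T : A ⊗[ℂ] B,
      prodLF ω σ ((a ⊗ₜ[ℂ] (1 : B)) * T) = ω (a * sliceLF σ T) := by
    intro T
    induction T using TensorProduct.induction_on with
    | zero => simp
    | tmul x y =>
        simp [Algebra.TensorProduct.tmul_mul_tmul, prodLF_tmul, sliceLF_tmul,
          mul_smul_comm, mul_assoc, mul_comm]
    | add x y hx hy => simp [mul_add, hx, hy]
  have hfac : Θ (a ⊗ₜ[ℂ] Bhat) = (a ⊗ₜ[ℂ] (1 : B)) * Θ ((1 : A) ⊗ₜ[ℂ] Bhat) := by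
    rw [← ha, ← map_mul]
    congr 1
    simp [Algebra.TensorProduct.tmul_mul_tmul]
  rw [hfac, key, div_eq_iff hν]
end
end

section
/- Let A, B₁, B₂ be unital *-algebras over ℂ, and for i = 1, 2 let Θᵢ : A ⊗ Bᵢ → A ⊗ Bᵢ be unital algebra homomorphisms. Let Θ̂₁, Θ̂₂ : A ⊗ B₁ ⊗ B₂ → A ⊗ B₁ ⊗ B₂ be the lifts defined by Θ̂₁ = Θ₁ ⊗ id_{B₂} (under the associativity isomorphism A ⊗ B₁ ⊗ B₂ ≅ (A ⊗ B₁) ⊗ B₂) and Θ̂₂ obtained from Θ₂ ⊗ id_{B₁} by conjugation with the isomorphism exchanging the B₁ and B₂ tensor factors. Suppose the causal factorisation Θ̂ = Θ̂₁ ∘ Θ̂₂ holds for a map Θ̂ : A ⊗ B₁ ⊗ B₂ → A ⊗ B₁ ⊗ B₂. Then for all states σᵢ on Bᵢ, all B̂ᵢ ∈ Bᵢ, every linear functional ω on A, and every a ∈ A: (ℐ_{σ₂}(B̂₂) ∘ ℐ_{σ₁}(B̂₁))(ω)(a) = (ω ⊗ σ₁ ⊗ σ₂)(Θ̂(a ⊗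 B̂₁ ⊗ B̂₂)), where ℐ_{σᵢ}(B̂ᵢ) is the pre-instrument associated with Θᵢ. -/
open scoped TensorProduct

noncomputable section

/-- The isomorphism `(A ⊗ B₁) ⊗ B₂ ≅ (A ⊗ B₂) ⊗ B₁` exchanging the two probe factors. -/
def exchangeProbes (A B₁ B₂ : Type) [AddCommGroup A] [Module ℂ A]
    [AddCommGroup B₁] [Module ℂ B₁] [AddCommGroup B₂] [Module ℂ B₂] :
    (A ⊗[ℂ] B₁) ⊗[ℂ] B₂ ≃ₗ[ℂ] (A ⊗[ℂ] B₂) ⊗[ℂ] B₁ :=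
  (TensorProduct.assoc ℂ A B₁ B₂) ≪≫ₗ
    (TensorProduct.congr (LinearEquiv.refl ℂ A) (TensorProduct.comm ℂ B₁ B₂)) ≪≫ₗ
      (TensorProduct.assoc ℂ A B₂ B₁).symm

variable {A B₁ B₂ : Type}
  [Ring A] [Algebra ℂ A] [StarRing A] [StarModule ℂ A]
  [Ring B₁] [Algebra ℂ B₁] [StarRing B₁] [StarModule ℂ B₁]
  [Ring B₂] [Algebra ℂ B₂] [StarRing B₂] [StarModule ℂ B₂]

/-- The lift `Θ̂₁ = Θ₁ ⊗ id` to `A ⊗ B₁ ⊗ B₂`. -/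
def liftOne (Θ₁ : A ⊗[ℂ] B₁ →ₐ[ℂ] A ⊗[ℂ] B₁) :
    (A ⊗[ℂ] B₁) ⊗[ℂ] B₂ →ₗ[ℂ] (A ⊗[ℂ] B₁) ⊗[ℂ] B₂ :=
  TensorProduct.map Θ₁.toLinearMap LinearMap.id

/-- The lift `Θ̂₂`, obtained from `Θ₂ ⊗ id` by conjugating with the exchange of the
two probe factors. -/
def liftTwo (Θ₂ : A ⊗[ℂ] B₂ →ₐ[ℂ] A ⊗[ℂ] B₂) :
    (A ⊗[ℂ] B₁) ⊗[ℂ] B₂ →ₗ[ℂ] (A ⊗[ℂ] B₁) ⊗[ℂ] B₂ :=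
  (exchangeProbes A B₁ B₂).symm.toLinearMap ∘ₗ
    TensorProduct.map Θ₂.toLinearMap LinearMap.id ∘ₗ (exchangeProbes A B₁ B₂).toLinearMap

/-- under the causal factorisation `Θ̂ = Θ̂₁ ∘ Θ̂₂`, the composition of
the two pre-instruments equals the joint pre-instrument of the combined probe. -/
theorem composite_preinstrument
    (Θ₁ : A ⊗[ℂ] B₁ →ₐ[ℂ] A ⊗[ℂ] B₁) (Θ₂ : A ⊗[ℂ] B₂ →ₐ[ℂ] A ⊗[ℂ] B₂)
    (Θhat : (A ⊗[ℂ] B₁) ⊗[ℂ] B₂ →ₗ[ℂ] (A ⊗[ℂ] B₁) ⊗[ℂ] B₂)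
    (hfact : Θhat = liftOne (B₂ := B₂) Θ₁ ∘ₗ liftTwo (B₁ := B₁) Θ₂)
    (σ₁ : B₁ →ₗ[ℂ] ℂ) (hσ₁ : IsState σ₁) (σ₂ : B₂ →ₗ[ℂ] ℂ) (hσ₂ : IsState σ₂)
    (Bhat₁ : B₁) (Bhat₂ : B₂) (ω : A →ₗ[ℂ] ℂ) (a : A) :
    preInstrument Θ₂.toLinearMap σ₂ Bhat₂ (preInstrument Θ₁.toLinearMap σ₁ Bhat₁ ω) a
      = prodLF (prodLF ω σ₁) σ₂ (Θhat ((a ⊗ₜ[ℂ] Bhat₁) ⊗ₜ[ℂ] Bhat₂)) := by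
  set_option synthInstance.maxHeartbeats 1000000 in
  subst hfact
  have key : ∀ x : A ⊗[ℂ] B₂,
      prodLF (preInstrument Θ₁.toLinearMap σ₁ Bhat₁ ω) σ₂ x
        = prodLF (prodLF ω σ₁) σ₂
            (liftOne (B₂ := B₂) Θ₁
              ((exchangeProbes A B₁ B₂).symm (x ⊗ₜ[ℂ] Bhat₁))) := by
    intro x
    induction x using TensorProduct.induction_on with
    | zero => rw [TensorProduct.zero_tmul]; simp only [map_zero]
    | tmul a' b' =>
        simp [exchangeProbes, liftOne, preInstrument, prodLF_tmul]
    | add x y hx hy =>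
        simp [TensorProduct.add_tmul, map_add, hx, hy]
  have h2 : liftTwo (B₁ := B₁) Θ₂ ((a ⊗ₜ[ℂ] Bhat₁) ⊗ₜ[ℂ] Bhat₂)
      = (exchangeProbes A B₁ B₂).symm
          ((Θ₂ (a ⊗ₜ[ℂ] Bhat₂)) ⊗ₜ[ℂ] Bhat₁) := by
    simp [liftTwo, exchangeProbes]
  calc preInstrument Θ₂.toLinearMap σ₂ Bhat₂ (preInstrument Θ₁.toLinearMap σ₁ Bhat₁ ω) a
      = prodLF (preInstrument Θ₁.toLinearMap σ₁ Bhat₁ ω) σ₂ (Θ₂ (a ⊗ₜ[ℂ] Bhat₂)) := rfl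
    _ = prodLF (prodLF ω σ₁) σ₂
          (liftOne (B₂ := B₂) Θ₁
            ((exchangeProbes A B₁ B₂).symm ((Θ₂ (a ⊗ₜ[ℂ] Bhat₂)) ⊗ₜ[ℂ] Bhat₁))) :=
        key _
    _ = _ := by rw [← h2]; rfl
end
end

section
/- Let A, B₁, B₂ be unital *-algebras over ℂ, and for i = 1, 2 let Θᵢ : A ⊗ Bᵢ → A ⊗ Bᵢ be unital algebra homomorphisms, with lifts Θ̂₁ = Θ₁ ⊗ id_{B₂} and Θ̂₂ (obtained from Θ₂ ⊗ id_{B₁} by exchanging the B₁ and B₂ tensor factors) to A ⊗ B₁ ⊗ B₂. Suppose both causal factorisations hold: Θ̂ = Θ̂₁ ∘ Θ̂₂ = Θ̂₂ ∘ Θ̂₁. Then for all states σᵢ on Bᵢ and all B̂ᵢ ∈ Bᵢ the pre-instruments commute and compose to the joint pre-instrument: ℐ_{σ₂}(B̂₂) ∘ ℐ_{σ₁}(B̂₁) = ℐ_{σ₁}(B̂₁) ∘ ℐ_{σ₂}(B̂₂), and both compositions send a linear functional ω on A to the functional a ↦ (ω ⊗ σ₁ ⊗ σ₂)(Θ̂(a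 ⊗ B̂₁ ⊗ B̂₂)). -/
open scoped TensorProduct

noncomputable section

variable {A B₁ B₂ : Type}
  [Ring A] [Algebra ℂ A] [StarRing A] [StarModule ℂ A]
  [Ring B₁] [Algebra ℂ B₁] [StarRing B₁] [StarModule ℂ B₁]
  [Ring B₂] [Algebra ℂ B₂] [StarRing B₂] [StarModule ℂ B₂]

lemma prodLF_comp_left {A B C : Type} [AddCommGroup A] [Module ℂ A] [AddCommGroup B]
    [Module ℂ B] [AddCommGroup C] [Module ℂ C]
    (ψ : C →ₗ[ℂ] ℂ) (T : A →ₗ[ℂ] C) (σ : B →ₗ[ℂ] ℂ) :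
    prodLF (ψ ∘ₗ T) σ = prodLF ψ σ ∘ₗ TensorProduct.map T LinearMap.id := by
  apply TensorProduct.ext'
  intro a b
  simp [prodLF_tmul]

lemma exchangeProbes_symm_tmul {A B₁ B₂ : Type} [AddCommGroup A] [Module ℂ A]
    [AddCommGroup B₁] [Module ℂ B₁] [AddCommGroup B₂] [Module ℂ B₂]
    (a : A) (b₁ : B₁) (b₂ : B₂) :
    (exchangeProbes A B₁ B₂).symm ((a ⊗ₜ[ℂ] b₂) ⊗ₜ[ℂ] b₁) = (a ⊗ₜ[ℂ] b₁) ⊗ₜ[ℂ] b₂ := by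
  simp [exchangeProbes]

lemma exchangeProbes_tmul {A B₁ B₂ : Type} [AddCommGroup A] [Module ℂ A]
    [AddCommGroup B₁] [Module ℂ B₁] [AddCommGroup B₂] [Module ℂ B₂]
    (a : A) (b₁ : B₁) (b₂ : B₂) :
    exchangeProbes A B₁ B₂ ((a ⊗ₜ[ℂ] b₁) ⊗ₜ[ℂ] b₂) = (a ⊗ₜ[ℂ] b₂) ⊗ₜ[ℂ] b₁ := by
  simp [exchangeProbes]

lemma prodLF_exchange_symm {A B₁ B₂ : Type} [AddCommGroup A] [Module ℂ A]
    [AddCommGroup B₁] [Module ℂ B₁] [AddCommGroup B₂] [Module ℂ B₂]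
    (ω : A →ₗ[ℂ] ℂ) (σ₁ : B₁ →ₗ[ℂ] ℂ) (σ₂ : B₂ →ₗ[ℂ] ℂ) (z : (A ⊗[ℂ] B₂) ⊗[ℂ] B₁) :
    prodLF (prodLF ω σ₁) σ₂ ((exchangeProbes A B₁ B₂).symm z)
      = prodLF (prodLF ω σ₂) σ₁ z := by
  have : prodLF (prodLF ω σ₁) σ₂ ∘ₗ (exchangeProbes A B₁ B₂).symm.toLinearMap
      = prodLF (prodLF ω σ₂) σ₁ := by
    apply TensorProduct.ext'
    intro x b₁
    induction x using TensorProduct.induction_on with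
    | zero => simp only [TensorProduct.zero_tmul, LinearEquiv.map_zero, map_zero]
    | tmul a b₂ =>
      simp [exchangeProbes_symm_tmul, prodLF_tmul]
      ring
    | add x y hx hy =>
      simp only [TensorProduct.add_tmul, map_add, hx, hy]
  exact DFunLike.congr_fun this z

set_option synthInstance.maxHeartbeats 1000000 in
/-- if both causal factorisations `Θ̂ = Θ̂₁ ∘ Θ̂₂ = Θ̂₂ ∘ Θ̂₁` hold, then
the pre-instruments commute and both compositions equal the joint pre-instrument. -/
theorem commuting_preinstruments
    (Θ₁ : A ⊗[ℂ] B₁ →ₐ[ℂ] A ⊗[ℂ] B₁) (Θ₂ : A ⊗[ℂ] B₂ →ₐ[ℂ] A ⊗[ℂ] B₂)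
    (Θhat : (A ⊗[ℂ] B₁) ⊗[ℂ] B₂ →ₗ[ℂ] (A ⊗[ℂ] B₁) ⊗[ℂ] B₂)
    (hfact₁₂ : Θhat = liftOne (B₂ := B₂) Θ₁ ∘ₗ liftTwo (B₁ := B₁) Θ₂)
    (hfact₂₁ : Θhat = liftTwo (B₁ := B₁) Θ₂ ∘ₗ liftOne (B₂ := B₂) Θ₁)
    (σ₁ : B₁ →ₗ[ℂ] ℂ) (hσ₁ : IsState σ₁) (σ₂ : B₂ →ₗ[ℂ] ℂ) (hσ₂ : IsState σ₂)
    (Bhat₁ : B₁) (Bhat₂ : B₂) :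
    (∀ ω : A →ₗ[ℂ] ℂ,
        preInstrument Θ₂.toLinearMap σ₂ Bhat₂ (preInstrument Θ₁.toLinearMap σ₁ Bhat₁ ω)
          = preInstrument Θ₁.toLinearMap σ₁ Bhat₁ (preInstrument Θ₂.toLinearMap σ₂ Bhat₂ ω)) ∧
      (∀ (ω : A →ₗ[ℂ] ℂ) (a : A),
        preInstrument Θ₂.toLinearMap σ₂ Bhat₂ (preInstrument Θ₁.toLinearMap σ₁ Bhat₁ ω) a
          = prodLF (prodLF ω σ₁) σ₂ (Θhat ((a ⊗ₜ[ℂ] Bhat₁) ⊗ₜ[ℂ] Bhat₂))) := by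
  set T₁ : A →ₗ[ℂ] A ⊗[ℂ] B₁ :=
    Θ₁.toLinearMap ∘ₗ (TensorProduct.mk ℂ A B₁).flip Bhat₁ with hT₁
  set T₂ : A →ₗ[ℂ] A ⊗[ℂ] B₂ :=
    Θ₂.toLinearMap ∘ₗ (TensorProduct.mk ℂ A B₂).flip Bhat₂ with hT₂
  -- lift lemma 1
  have hC : ∀ x : A ⊗[ℂ] B₂,
      liftOne (B₂ := B₂) Θ₁ ((exchangeProbes A B₁ B₂).symm (x ⊗ₜ[ℂ] Bhat₁))
        = TensorProduct.map T₁ LinearMap.id x := by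
    intro x
    induction x using TensorProduct.induction_on with
    | zero => simp only [TensorProduct.zero_tmul, LinearEquiv.map_zero, map_zero]
    | tmul a b₂ =>
      simp [exchangeProbes_symm_tmul, liftOne, hT₁]
    | add x y hx hy => simp only [TensorProduct.add_tmul, map_add, hx, hy]
  -- lift lemma 2
  have hD : ∀ y : A ⊗[ℂ] B₁,
      liftTwo (B₁ := B₁) Θ₂ (y ⊗ₜ[ℂ] Bhat₂)
        = (exchangeProbes A B₁ B₂).symm (TensorProduct.map T₂ LinearMap.id y) := by
    intro y
    induction y using TensorProduct.induction_on with
    | zero => simp only [TensorProduct.zero_tmul, LinearEquiv.map_zero, map_zero]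
    | tmul a b₁ =>
      simp [liftTwo, exchangeProbes_tmul, hT₂]
    | add x y hx hy => simp only [TensorProduct.add_tmul, map_add, hx, hy]
  -- key computations
  have key : ∀ (ω : A →ₗ[ℂ] ℂ) (a : A),
      preInstrument Θ₂.toLinearMap σ₂ Bhat₂ (preInstrument Θ₁.toLinearMap σ₁ Bhat₁ ω) a
        = prodLF (prodLF ω σ₁) σ₂ (Θhat ((a ⊗ₜ[ℂ] Bhat₁) ⊗ₜ[ℂ] Bhat₂)) := by
    intro ω a
    have h1 : preInstrument Θ₁.toLinearMap σ₁ Bhat₁ ω = prodLF ω σ₁ ∘ₗ T₁ := rfl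
    have h2 : Θhat ((a ⊗ₜ[ℂ] Bhat₁) ⊗ₜ[ℂ] Bhat₂)
        = TensorProduct.map T₁ LinearMap.id (Θ₂.toLinearMap (a ⊗ₜ[ℂ] Bhat₂)) := by
      rw [hfact₁₂]
      have : liftTwo (B₁ := B₁) Θ₂ ((a ⊗ₜ[ℂ] Bhat₁) ⊗ₜ[ℂ] Bhat₂)
          = (exchangeProbes A B₁ B₂).symm ((Θ₂.toLinearMap (a ⊗ₜ[ℂ] Bhat₂)) ⊗ₜ[ℂ] Bhat₁) := by
        simp [liftTwo, exchangeProbes_tmul]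
      simp only [LinearMap.comp_apply, this, hC]
    rw [h2]
    simp only [preInstrument, LinearMap.comp_apply, h1, prodLF_comp_left]
    rfl
  have key' : ∀ (ω : A →ₗ[ℂ] ℂ) (a : A),
      preInstrument Θ₁.toLinearMap σ₁ Bhat₁ (preInstrument Θ₂.toLinearMap σ₂ Bhat₂ ω) a
        = prodLF (prodLF ω σ₁) σ₂ (Θhat ((a ⊗ₜ[ℂ] Bhat₁) ⊗ₜ[ℂ] Bhat₂)) := by
    intro ω a
    have h1 : preInstrument Θ₂.toLinearMap σ₂ Bhat₂ ω = prodLF ω σ₂ ∘ₗ T₂ := rfl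
    have h2 : Θhat ((a ⊗ₜ[ℂ] Bhat₁) ⊗ₜ[ℂ] Bhat₂)
        = (exchangeProbes A B₁ B₂).symm
            (TensorProduct.map T₂ LinearMap.id (Θ₁.toLinearMap (a ⊗ₜ[ℂ] Bhat₁))) := by
      rw [hfact₂₁]
      have hL : liftOne (B₂ := B₂) Θ₁ ((a ⊗ₜ[ℂ] Bhat₁) ⊗ₜ[ℂ] Bhat₂)
          = (Θ₁.toLinearMap (a ⊗ₜ[ℂ] Bhat₁)) ⊗ₜ[ℂ] Bhat₂ := rfl
      simp only [LinearMap.comp_apply, hL, hD]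
    rw [h2, prodLF_exchange_symm]
    simp only [preInstrument, LinearMap.comp_apply, h1, prodLF_comp_left]
    rfl
  exact ⟨fun ω => by ext a; rw [key ω a, key' ω a], key⟩
end
end

section
/- Let A and B be unital *-algebras over ℂ, ω a positive linear functional on A, and σ a positive linear functional on B. Then the product functional ω ⊗ σ is positive on A ⊗ B: for every x ∈ A ⊗ B, (ω ⊗ σ)(star x * x) is a nonnegative real number. -/
/-!
Write `x = ∑ i, c i ⊗ₜ d i`. Then `(ω ⊗ σ)(star x * x)` is the sum of the entries of the Hadamard
product of the Gram matrices `[ω (star cᵢ * cⱼ)]` and `[σ (star dᵢ * dⱼ)]`. Positivity of a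
functional makes its Gram matrices positive semidefinite (over `ℂ`, a nonnegative quadratic form
forces hermiticity), so by the Schur product theorem the Hadamard product is positive
semidefinite, and its entry sum is its quadratic form at the all-ones vector.
-/

open scoped TensorProduct

noncomputable section

open scoped ComplexOrder

namespace Matrix

variable {n : Type*} [Fintype n]

theorem posSemidef_of_forall_dotProduct_mulVec_nonneg {M : Matrix n n ℂ}
    (hM : ∀ v, 0 ≤ star v ⬝ᵥ (M *ᵥ v)) : M.PosSemidef := by
  classical
  refine .of_dotProduct_mulVec_nonneg ?_ hM
  rw [← isSymmetric_toEuclideanLin_iff, LinearMap.isSymmetric_iff_inner_map_self_real]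
  intro v
  rw [EuclideanSpace.inner_eq_star_dotProduct, Complex.conj_eq_iff_im, dotProduct_star,
    dotProduct_comm, Complex.star_def, Complex.conj_im, neg_eq_zero]
  exact (Complex.nonneg_iff.mp (hM _)).2.symm

theorem PosSemidef.sum_hadamard_nonneg {M N : Matrix n n ℂ} (hM : M.PosSemidef)
    (hN : N.PosSemidef) : 0 ≤ ∑ i, ∑ j, M i j * N i j := by
  simpa [dotProduct, mulVec, Finset.mul_sum] using (hM.hadamard hN).dotProduct_mulVec_nonneg 1

end Matrix

theorem isPositiveLF_iff {A : Type} [Ring A] [Algebra ℂ A] [StarRing A] (φ : A →ₗ[ℂ] ℂ) :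
    IsPositiveLF φ ↔ ∀ x, 0 ≤ φ (star x * x) :=
  forall_congr' fun _ =>
    (RCLike.nonneg_iff_exists_ofReal.trans (exists_congr fun _ => and_congr_right' eq_comm)).symm

theorem IsPositiveLF.posSemidef_gram {A : Type} [Ring A] [Algebra ℂ A] [StarRing A]
    [StarModule ℂ A] {φ : A →ₗ[ℂ] ℂ} (hφ : IsPositiveLF φ) {n : Type*} [Fintype n]
    (c : n → A) : (Matrix.of fun i j => φ (star (c i) * c j)).PosSemidef := by
  refine Matrix.posSemidef_of_forall_dotProduct_mulVec_nonneg fun v => ?_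
  convert (isPositiveLF_iff φ).mp hφ (∑ j, v j • c j) using 1
  simp only [dotProduct, Matrix.mulVec, Matrix.of_apply, Pi.star_apply, star_sum, star_smul,
    Finset.sum_mul, Finset.mul_sum, smul_mul_smul, map_sum, map_smul, smul_eq_mul]
  rw [Finset.sum_comm]
  congr! 2 with i - j -
  ring

variable {A B : Type}
  [Ring A] [Algebra ℂ A] [StarRing A] [StarModule ℂ A]
  [Ring B] [Algebra ℂ B] [StarRing B] [StarModule ℂ B]

theorem prodLF_tensorStar_sum_mul_sum (ω : A →ₗ[ℂ] ℂ) (σ : B →ₗ[ℂ] ℂ) {ι : Type*} [Fintype ι]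
    (c : ι → A) (d : ι → B) :
    prodLF ω σ (tensorStar (∑ i, c i ⊗ₜ[ℂ] d i) * ∑ i, c i ⊗ₜ[ℂ] d i)
      = ∑ i, ∑ j, ω (star (c i) * c j) * σ (star (d i) * d j) := by
  simp [map_sum, Finset.sum_mul_sum, prodLF_tmul]

/-- the product of positive functionals is positive on `A ⊗ B`:
`(ω ⊗ σ)(star x * x)` is a nonnegative real for every `x ∈ A ⊗ B`. -/
theorem prod_functional_positive
    (ω : A →ₗ[ℂ] ℂ) (hω : IsPositiveLF ω) (σ : B →ₗ[ℂ] ℂ) (hσ : IsPositiveLF σ)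
    (x : A ⊗[ℂ] B) :
    ∃ r : ℝ, 0 ≤ r ∧ prodLF ω σ (tensorStar x * x) = (r : ℂ) := by
  obtain ⟨S, rfl⟩ := TensorProduct.exists_finset x
  rw [← Finset.sum_coe_sort S fun p => p.1 ⊗ₜ[ℂ] p.2, prodLF_tensorStar_sum_mul_sum]
  refine (RCLike.nonneg_iff_exists_ofReal.mp ?_).imp fun _ ⟨hr, hsum⟩ => ⟨hr, hsum.symm⟩
  exact (hω.posSemidef_gram _).sum_hadamard_nonneg (hσ.posSemidef_gram _)
end
end
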